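/- The derivations ℒ₁ and ℒ₃ of ℂ[x₂,x₃,x₄,z₄,z₅,z₆] commute, i.e. ℒ₁(ℒ₃P) = ℒ₃(ℒ₁P) for every polynomial P, and both annihilate the four polynomials λ̂₄, λ̂₆, λ̂₈, λ̂₁₀: ℒ₁ λ̂ₖ = 0 and ℒ₃ λ̂ₖ = 0 for k = 4, 6, 8, 10. -/

import Mathlib

open MvPolynomial

noncomputable section

/-- The polynomial ring ℂ[x₂,x₃,x₄,z₄,z₅,z₆];
`X 0 = x₂`, `X 1 = x₃`, `X 2 = x₄`, `X 3 = z₄`, `X 4 = z₅`, `X 5 = z₆`. -/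
abbrev R6 : Type := MvPolynomial (Fin 6) ℂ

def x2 : R6 := X 0
def x3 : R6 := X 1
def x4 : R6 := X 2
def z4 : R6 := X 3
def z5 : R6 := X 4
def z6 : R6 := X 5

/-- P₅ = 4(3x₂x₃ + z₅) -/
def P5 : R6 := 4 * (3 * x2 * x3 + z5)
/-- P₇ = 4(2x₂z₅ + x₃z₄) -/
def P7 : R6 := 4 * (2 * x2 * z5 + x3 * z4)
/-- G₆' = x₃z₄ − x₂z₅ -/
def G6' : R6 := x3 * z4 - x2 * z5
/-- G₆'' = x₄z₄ − x₂z₆ -/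
def G6'' : R6 := x4 * z4 - x2 * z6
/-- G₆''' = 8x₂(x₃z₄ − x₂z₅) + (x₄z₅ − x₃z₆) + 4z₄z₅ -/
def G6''' : R6 := 8 * x2 * (x3 * z4 - x2 * z5) + (x4 * z5 - x3 * z6) + 4 * z4 * z5

/-- ℒ₁ = x₃∂/∂x₂ + x₄∂/∂x₃ + P₅∂/∂x₄ + z₅∂/∂z₄ + z₆∂/∂z₅ + P₇∂/∂z₆ -/
def L1 (P : R6) : R6 :=
  x3 * pderiv (0 : Fin 6) P + x4 * pderiv (1 : Fin 6) P + P5 * pderiv (2 : Fin 6) P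
    + z5 * pderiv (3 : Fin 6) P + z6 * pderiv (4 : Fin 6) P + P7 * pderiv (5 : Fin 6) P

/-- ℒ₃ = z₅∂/∂x₂ + z₆∂/∂x₃ + P₇∂/∂x₄ + G₆'∂/∂z₄ + G₆''∂/∂z₅ + G₆'''∂/∂z₆ -/
def L3 (P : R6) : R6 :=
  z5 * pderiv (0 : Fin 6) P + z6 * pderiv (1 : Fin 6) P + P7 * pderiv (2 : Fin 6) P
    + G6' * pderiv (3 : Fin 6) P + G6'' * pderiv (4 : Fin 6) P + G6''' * pderiv (5 : Fin 6) P

/-- λ̂₄ = ½(x₄ − 6x₂² − 4z₄) -/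
def lam4 : R6 := C (1/2 : ℂ) * (x4 - 6 * x2 ^ 2 - 4 * z4)
/-- λ̂₆ = −¼(2x₂(x₄ + 4z₄) − 8x₂³ − x₃² − 2z₆) -/
def lam6 : R6 := -C (1/4 : ℂ) * (2 * x2 * (x4 + 4 * z4) - 8 * x2 ^ 3 - x3 ^ 2 - 2 * z6)
/-- λ̂₈ = −½(x₂z₆ + x₄z₄ − 8x₂²z₄ − 2z₄² − x₃z₅) -/
def lam8 : R6 :=
  -C (1/2 : ℂ) * (x2 * z6 + x4 * z4 - 8 * x2 ^ 2 * z4 - 2 * z4 ^ 2 - x3 * z5)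
/-- λ̂₁₀ = ¼(8x₂z₄² − 2z₄z₆ + z₅²) -/
def lam10 : R6 := C (1/4 : ℂ) * (8 * x2 * z4 ^ 2 - 2 * z4 * z6 + z5 ^ 2)

/-! Both operators are derivations of `ℂ[x₂,x₃,x₄,z₄,z₅,z₆]`, so each is determined by its values
on the six generators. The commutator of two derivations is again a derivation, hence
`ℒ₁ℒ₃ = ℒ₃ℒ₁` reduces to six polynomial identities `ℒ₁(ℒ₃ X i) = ℒ₃(ℒ₁ X i)`, and `ℒₖ λ̂ⱼ = 0`
follows by expanding `ℒₖ λ̂ⱼ` with the Leibniz rule. -/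

namespace MvPolynomial

theorem derivation_eq_sum_smul_pderiv {R σ : Type*} [CommSemiring R] [Fintype σ]
    (D : Derivation R (MvPolynomial σ R) (MvPolynomial σ R)) :
    D = ∑ i, D (X i) • pderiv i := by
  classical
  refine derivation_ext fun j => ?_
  rw [← Derivation.coeFnAddMonoidHom_apply (∑ i, _), map_sum, Finset.sum_apply]
  simp [pderiv_X, Pi.single_apply]

theorem derivation_apply_comm_of_forall_X {R σ : Type*} [CommRing R]
    {D₁ D₂ : Derivation R (MvPolynomial σ R) (MvPolynomial σ R)}
    (h : ∀ i, D₁ (D₂ (X i)) = D₂ (D₁ (X i))) (p : MvPolynomial σ R) :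
    D₁ (D₂ p) = D₂ (D₁ p) := by
  have : ⁅D₁, D₂⁆ = 0 := derivation_ext fun i => by simp [Derivation.commutator_apply, h]
  simpa [Derivation.commutator_apply, sub_eq_zero] using congr($this p)

end MvPolynomial

@[simp]
theorem Derivation.map_ofNat {R A M : Type*} [CommSemiring R] [CommSemiring A] [Algebra R A]
    [AddCommMonoid M] [Module A M] [Module R M] (D : Derivation R A M) (n : ℕ) [n.AtLeastTwo] :
    D (no_index (OfNat.ofNat n : A)) = 0 := by
  rw [← Nat.cast_ofNat, D.map_natCast]

def derivL1 : Derivation ℂ R6 R6 := mkDerivation ℂ ![x3, x4, P5, z5, z6, P7]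

def derivL3 : Derivation ℂ R6 R6 := mkDerivation ℂ ![z5, z6, P7, G6', G6'', G6''']

theorem L1_eq_derivL1 (P : R6) : L1 P = derivL1 P := by
  rw [derivation_eq_sum_smul_pderiv derivL1]
  simp [L1, derivL1, Fin.sum_univ_six]

theorem L3_eq_derivL3 (P : R6) : L3 P = derivL3 P := by
  rw [derivation_eq_sum_smul_pderiv derivL3]
  simp [L3, derivL3, Fin.sum_univ_six]

theorem derivL1_X (i : Fin 6) : derivL1 (X i) = ![x3, x4, P5, z5, z6, P7] i :=
  mkDerivation_X ..

theorem derivL3_X (i : Fin 6) : derivL3 (X i) = ![z5, z6, P7, G6', G6'', G6'''] i :=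
  mkDerivation_X ..

@[simp] theorem derivL1_x2 : derivL1 x2 = x3 := derivL1_X 0
@[simp] theorem derivL1_x3 : derivL1 x3 = x4 := derivL1_X 1
@[simp] theorem derivL1_x4 : derivL1 x4 = P5 := derivL1_X 2
@[simp] theorem derivL1_z4 : derivL1 z4 = z5 := derivL1_X 3
@[simp] theorem derivL1_z5 : derivL1 z5 = z6 := derivL1_X 4
@[simp] theorem derivL1_z6 : derivL1 z6 = P7 := derivL1_X 5

@[simp] theorem derivL3_x2 : derivL3 x2 = z5 := derivL3_X 0
@[simp] theorem derivL3_x3 : derivL3 x3 = z6 := derivL3_X 1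
@[simp] theorem derivL3_x4 : derivL3 x4 = P7 := derivL3_X 2
@[simp] theorem derivL3_z4 : derivL3 z4 = G6' := derivL3_X 3
@[simp] theorem derivL3_z5 : derivL3 z5 = G6'' := derivL3_X 4
@[simp] theorem derivL3_z6 : derivL3 z6 = G6''' := derivL3_X 5

theorem derivL1_derivL3_comm_X (i : Fin 6) :
    derivL1 (derivL3 (X i)) = derivL3 (derivL1 (X i)) := by
  fin_cases i <;> simp [derivL1_X, derivL3_X, P5, P7, G6', G6'', G6''', Derivation.leibniz] <;>
    ring

theorem L1_L3_commute_and_annihilate_lambdas :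
    (∀ P : R6, L1 (L3 P) = L3 (L1 P)) ∧
    L1 lam4 = 0 ∧ L1 lam6 = 0 ∧ L1 lam8 = 0 ∧ L1 lam10 = 0 ∧
    L3 lam4 = 0 ∧ L3 lam6 = 0 ∧ L3 lam8 = 0 ∧ L3 lam10 = 0 := by
  simp only [L1_eq_derivL1, L3_eq_derivL3]
  refine ⟨derivation_apply_comm_of_forall_X derivL1_derivL3_comm_X, ?_, ?_, ?_, ?_, ?_, ?_, ?_, ?_⟩
  all_goals
    simp [lam4, lam6, lam8, lam10, P5, P7, G6', G6'', G6''', Derivation.leibniz,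
      Derivation.leibniz_pow]
    ring

end
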